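/- Let γ ∈ (0,1), n ≥ 1, τ ≥ 0, and let X = (X_1, …, X_n) be a standard Gaussian vector with law N(0, I_n) on a probability space (Ω, P). For every random vector Θ = (Θ_1, …, Θ_n) taking values in ℝⁿ, independent of X, and such that P(|Θ̄_n| ≤ τ) > 0 where Θ̄_n = (Θ_1 + … + Θ_n)/n, one has P(|∑_{i=1}^n (Θ_i + X_i)| > √n · λ_γ(τ√n) ∣ |Θ̄_n| ≤ τ) ≤ γ. (The RDT test T^RDT_n has level γ for the mean testing problem.) -/

import Mathlib

open MeasureTheory ProbabilityTheory Real Filter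

/-- The cumulative distribution function `Φ` of the standard normal law `N(0,1)`. -/
noncomputable def Phi (x : ℝ) : ℝ := ((gaussianReal 0 1) (Set.Iic x)).toReal

/-- The inverse `Φ⁻¹` of the standard normal cdf (on `(0,1)`). -/
noncomputable def PhiInv (y : ℝ) : ℝ := Function.invFun Phi y

/-!
Write `T = ∑ Θᵢ` and `S = ∑ Xᵢ`; then `S ~ N(0, n)` is independent of `T`. Given `T = t`, the test
rejects with probability at most `2 - Φ(λ - t/√n) - Φ(λ + t/√n)`. Since `γ < 1` forces `λ ≥ 0`,
this bound increases with `|t|`: the Gaussian density is larger on `[λ - a, λ - u]` than on its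
mirror image `[λ + u, λ + a]` about `λ`. On the event `|T/n| ≤ τ` we have `|t/√n| ≤ τ√n`, so the
conditional rejection probability is at most `γ` there, and integrating over the law of `T` gives
the claim.
-/

open scoped NNReal ENNReal
open Set

theorem ProbabilityTheory.iIndepFun.map_sum_eq_gaussianReal {Ω ι : Type*} [MeasurableSpace Ω]
    {P : Measure Ω} [IsProbabilityMeasure P] {X : ι → Ω → ℝ} (hmeas : ∀ i, Measurable (X i))
    (hindep : iIndepFun X P) {m : ι → ℝ} {v : ι → ℝ≥0}
    (hdist : ∀ i, P.map (X i) = gaussianReal (m i) (v i)) (s : Finset ι) :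
    P.map (fun ω => ∑ i ∈ s, X i ω) = gaussianReal (∑ i ∈ s, m i) (∑ i ∈ s, v i) := by
  classical
  induction s using Finset.induction with
  | empty => simp [Measure.map_const]
  | insert i s hi ih =>
    have hsum : (fun ω => ∑ j ∈ insert i s, X j ω) = (∑ j ∈ s, X j) + X i := by
      ext ω; simp [Finset.sum_insert hi, add_comm]
    rw [hsum, Finset.sum_insert hi, Finset.sum_insert hi, add_comm (m i), add_comm (v i)]
    refine gaussianReal_add_gaussianReal_of_indepFun
      (hindep.indepFun_finsetSum_of_notMem hmeas hi) ?_ (hdist i)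
    simpa [Finset.sum_fn] using ih

theorem ProbabilityTheory.IndepFun.measure_preimage_inter_le_mul {Ω α β : Type*} [MeasurableSpace Ω]
    [MeasurableSpace α] [MeasurableSpace β] {P : Measure Ω} [IsFiniteMeasure P]
    {T : Ω → α} {S : Ω → β} (hT : Measurable T) (hS : Measurable S) (hTS : IndepFun T S P)
    {C : Set (α × β)} (hC : MeasurableSet C) {B : Set α} (hB : MeasurableSet B) {c : ℝ≥0∞}
    (hc : ∀ t ∈ B, P.map S (Prod.mk t ⁻¹' C) ≤ c) :
    P ((fun ω => (T ω, S ω)) ⁻¹' C ∩ T ⁻¹' B) ≤ c * P (T ⁻¹' B) := by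
  have hCB : MeasurableSet (C ∩ Prod.fst ⁻¹' B) := hC.inter (measurable_fst hB)
  have hsection :
      ∀ t, P.map S (Prod.mk t ⁻¹' (C ∩ Prod.fst ⁻¹' B)) ≤ B.indicator (fun _ => c) t := by
    intro t
    by_cases ht : t ∈ B
    · rw [indicator_of_mem ht]
      exact (measure_mono fun s hs => hs.1).trans (hc t ht)
    · rw [indicator_of_notMem ht, nonpos_iff_eq_zero]
      convert measure_empty (μ := P.map S)
      ext s
      simp [ht]
  calc P ((fun ω => (T ω, S ω)) ⁻¹' C ∩ T ⁻¹' B)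
      = ((P.map T).prod (P.map S)) (C ∩ Prod.fst ⁻¹' B) := by
        rw [← (indepFun_iff_map_prod_eq_prod_map_map hT.aemeasurable hS.aemeasurable).1 hTS,
          Measure.map_apply (hT.prodMk hS) hCB]
        rfl
    _ ≤ ∫⁻ t, B.indicator (fun _ => c) t ∂P.map T := by
        rw [Measure.prod_apply hCB]
        exact lintegral_mono hsection
    _ = c * P (T ⁻¹' B) := by
        rw [lintegral_indicator_const hB, Measure.map_apply hT hB]

theorem Phi_eq_cdf : Phi = cdf (gaussianReal 0 1) :=
  funext fun x => (cdf_eq_real _ x).symm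

theorem Phi_nonneg (x : ℝ) : 0 ≤ Phi x := Phi_eq_cdf ▸ cdf_nonneg _ x

theorem Phi_le_one (x : ℝ) : Phi x ≤ 1 := Phi_eq_cdf ▸ cdf_le_one _ x

theorem Phi_monotone : Monotone Phi := Phi_eq_cdf ▸ monotone_cdf _

theorem gaussianReal_Iic (x : ℝ) : gaussianReal 0 1 (Iic x) = ENNReal.ofReal (Phi x) := by
  rw [Phi_eq_cdf, ofReal_cdf]

theorem gaussianReal_Ioi (x : ℝ) : gaussianReal 0 1 (Ioi x) = ENNReal.ofReal (1 - Phi x) := by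
  rw [← compl_Iic, prob_compl_eq_one_sub measurableSet_Iic, gaussianReal_Iic,
    ENNReal.ofReal_sub _ (Phi_nonneg x), ENNReal.ofReal_one]

theorem Phi_neg (x : ℝ) : Phi (-x) = 1 - Phi x := by
  have : NullSingletonClass (gaussianReal 0 1) :=
    ⟨fun x => gaussianReal_absolutelyContinuous 0 one_ne_zero (measure_singleton x)⟩
  have hsymm : gaussianReal 0 1 (Iic (-x)) = gaussianReal 0 1 (Ioi x) := by
    conv_lhs =>
      rw [← neg_zero, ← gaussianReal_map_neg, Measure.map_apply measurable_neg measurableSet_Iic]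
    rw [show Neg.neg ⁻¹' Iic (-x) = Ici x by ext; simp]
    exact measure_congr Ioi_ae_eq_Ici.symm
  have := congrArg ENNReal.toReal hsymm
  rwa [gaussianReal_Iic, gaussianReal_Ioi, ENNReal.toReal_ofReal (Phi_nonneg _),
    ENNReal.toReal_ofReal (sub_nonneg.2 (Phi_le_one x))] at this

theorem Phi_sub_Phi_eq_integral (p q : ℝ) (hpq : p ≤ q) :
    Phi q - Phi p = ∫ x in p..q, gaussianPDFReal 0 1 x := by
  have hmono : Phi p ≤ Phi q := Phi_monotone hpq
  have hint : 0 ≤ ∫ x in p..q, gaussianPDFReal 0 1 x :=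
    intervalIntegral.integral_nonneg hpq fun x _ => gaussianPDFReal_nonneg 0 1 x
  rw [← ENNReal.ofReal_eq_ofReal_iff (sub_nonneg.2 hmono) hint, Phi_eq_cdf,
    ← StieltjesFunction.measure_Ioc, measure_cdf, gaussianReal_apply 0 one_ne_zero,
    intervalIntegral.integral_of_le hpq, ofReal_integral_eq_lintegral_ofReal
      (integrable_gaussianPDFReal 0 1).integrableOn
      (Eventually.of_forall fun x => gaussianPDFReal_nonneg 0 1 x)]
  rfl

theorem gaussianPDFReal_add_le_sub {lam t : ℝ} (hlam : 0 ≤ lam) (ht : 0 ≤ t) :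
    gaussianPDFReal 0 1 (lam + t) ≤ gaussianPDFReal 0 1 (lam - t) := by
  simp only [gaussianPDFReal, sub_zero, NNReal.coe_one, mul_one]
  exact mul_le_mul_of_nonneg_left (exp_le_exp.2 (by nlinarith)) (by positivity)

theorem Phi_add_Phi_le {lam u a : ℝ} (hlam : 0 ≤ lam) (hua : |u| ≤ a) :
    Phi (lam - a) + Phi (lam + a) ≤ Phi (lam - u) + Phi (lam + u) := by
  wlog hu : 0 ≤ u generalizing u
  · have := this (u := -u) (by rwa [abs_neg]) (by linarith)
    rw [sub_neg_eq_add, ← sub_eq_add_neg] at this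
    linarith
  have hua' : u ≤ a := (le_abs_self u).trans hua
  have hcont : Continuous (gaussianPDFReal 0 1) := by unfold gaussianPDFReal; fun_prop
  have key : Phi (lam + a) - Phi (lam + u) ≤ Phi (lam - u) - Phi (lam - a) := by
    rw [Phi_sub_Phi_eq_integral _ _ (by linarith), Phi_sub_Phi_eq_integral _ _ (by linarith),
      ← intervalIntegral.integral_comp_add_left, ← intervalIntegral.integral_comp_sub_left]
    refine intervalIntegral.integral_mono_on hua'
      ((hcont.comp (by fun_prop)).intervalIntegrable u a)
      ((hcont.comp (by fun_prop)).intervalIntegrable u a)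
      fun t ht => gaussianPDFReal_add_le_sub hlam (hu.trans ht.1)
  linarith

theorem nonneg_of_two_sub_Phi_sub_Phi_lt_one {lam a : ℝ}
    (h : 2 - Phi (lam - a) - Phi (lam + a) < 1) : 0 ≤ lam := by
  by_contra! hneg
  have h₁ : Phi (lam - a) ≤ Phi (-a) := Phi_monotone (by linarith)
  have h₂ : Phi (lam + a) ≤ Phi a := Phi_monotone (by linarith)
  linarith [Phi_neg a]

theorem gaussianReal_lt_abs_add_le (lam u : ℝ) :
    gaussianReal 0 1 {z | lam < |u + z|} ≤ ENNReal.ofReal (2 - Phi (lam - u) - Phi (lam + u)) := by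
  have hsub : {z | lam < |u + z|} ⊆ Ioi (lam - u) ∪ Iic (-(lam + u)) := by
    intro z hz
    rcases lt_abs.1 (show lam < |u + z| from hz) with h | h
    · left; simp only [mem_Ioi]; linarith
    · right; simp only [mem_Iic]; linarith
  calc gaussianReal 0 1 {z | lam < |u + z|}
      ≤ gaussianReal 0 1 (Ioi (lam - u)) + gaussianReal 0 1 (Iic (-(lam + u))) :=
        (measure_mono hsub).trans (measure_union_le _ _)
    _ = ENNReal.ofReal (2 - Phi (lam - u) - Phi (lam + u)) := by
        rw [gaussianReal_Ioi, gaussianReal_Iic, Phi_neg,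
          ← ENNReal.ofReal_add (sub_nonneg.2 (Phi_le_one _)) (sub_nonneg.2 (Phi_le_one _))]
        ring_nf

theorem gaussianReal_sqrt_mul_lt_abs_add_le {v : ℝ≥0} (hv : v ≠ 0) {lam a t : ℝ}
    (hlam : 0 ≤ lam) (ht : |t / √v| ≤ a) :
    gaussianReal 0 v {s | √v * lam < |t + s|} ≤
      ENNReal.ofReal (2 - Phi (lam - a) - Phi (lam + a)) := by
  have hsv : 0 < √(v : ℝ) := Real.sqrt_pos.2 (NNReal.coe_pos.2 (pos_iff_ne_zero.2 hv))
  have hmap : (gaussianReal 0 1).map (√(v : ℝ) * ·) = gaussianReal 0 v := by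
    rw [gaussianReal_map_const_mul, mul_zero, mul_one]
    congr 1
    exact NNReal.eq (Real.sq_sqrt v.coe_nonneg)
  have hpre : (√(v : ℝ) * ·) ⁻¹' {s | √v * lam < |t + s|} = {z | lam < |t / √v + z|} := by
    ext z
    simp only [mem_preimage, mem_ofPred_eq]
    rw [show t + √v * z = √v * (t / √v + z) by field_simp, abs_mul, abs_of_pos hsv,
      mul_lt_mul_iff_right₀ hsv]
  rw [← hmap, Measure.map_apply (by fun_prop) (measurableSet_lt measurable_const (by fun_prop)),
    hpre]
  refine (gaussianReal_lt_abs_add_le lam _).trans (ENNReal.ofReal_le_ofReal ?_)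
  linarith [Phi_add_Phi_le hlam ht]

theorem stmt14_general {Ω : Type*} [MeasurableSpace Ω] (P : Measure Ω) [IsProbabilityMeasure P]
    (γ τ : ℝ) (hγ : γ ∈ Set.Ioo (0 : ℝ) 1) (n : ℕ) (hn : 1 ≤ n)
    (X : Fin n → Ω → ℝ) (hmeas : ∀ i, Measurable (X i))
    (hindep : iIndepFun X P)
    (hdist : ∀ i, Measure.map (X i) P = gaussianReal 0 1)
    (Θ : Ω → Fin n → ℝ) (hΘmeas : Measurable Θ)
    (hΘX : IndepFun Θ (fun ω i => X i ω) P)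
    (lam : ℝ)
    (hlam : 2 - Phi (lam - τ * Real.sqrt n) - Phi (lam + τ * Real.sqrt n) = γ) :
    P ({ω | Real.sqrt n * lam < |∑ i, (Θ ω i + X i ω)|} ∩
        {ω | |(∑ i, Θ ω i) / n| ≤ τ}) / P {ω | |(∑ i, Θ ω i) / n| ≤ τ} ≤
      ENNReal.ofReal γ := by
  have hsum : Measurable fun v : Fin n → ℝ => ∑ i, v i := by fun_prop
  have hS : P.map (fun ω => ∑ i, X i ω) = gaussianReal 0 n := by
    simpa using hindep.map_sum_eq_gaussianReal hmeas hdist Finset.univ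
  have hlam0 : 0 ≤ lam := nonneg_of_two_sub_Phi_sub_Phi_lt_one (hlam ▸ hγ.2)
  refine ENNReal.div_le_of_le_mul ?_
  simp_rw [Finset.sum_add_distrib]
  refine (hΘX.comp hsum hsum).measure_preimage_inter_le_mul (T := fun ω => ∑ i, Θ ω i)
    (S := fun ω => ∑ i, X i ω) (C := {p : ℝ × ℝ | √n * lam < |p.1 + p.2|})
    (B := {t | |t / n| ≤ τ}) (hsum.comp hΘmeas) (by fun_prop)
    (measurableSet_lt measurable_const (by fun_prop))
    (measurableSet_le (by fun_prop) measurable_const) fun t ht => ?_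
  rw [hS, ← hlam]
  have hn0 : (0 : ℝ) < n := by exact_mod_cast hn
  refine gaussianReal_sqrt_mul_lt_abs_add_le (by exact_mod_cast hn0.ne') hlam0 ?_
  calc |t / √(n : ℝ≥0)| = |t / n| * √n := by
        rw [NNReal.coe_natCast, abs_div, abs_div, abs_of_pos (Real.sqrt_pos.2 hn0), abs_of_pos hn0]
        field_simp
        rw [Real.sq_sqrt hn0.le]
    _ ≤ τ * √n := by gcongr; exact ht

/-- the RDT test has level γ for the mean testing problem: conditionally
on |Θ̄_n| ≤ τ, the probability that it rejects is at most γ. -/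
theorem stmt14 {Ω : Type*} [MeasurableSpace Ω] (P : Measure Ω) [IsProbabilityMeasure P]
    (γ τ : ℝ) (hγ : γ ∈ Set.Ioo (0 : ℝ) 1) (hτ : 0 ≤ τ) (n : ℕ) (hn : 1 ≤ n)
    (X : Fin n → Ω → ℝ) (hmeas : ∀ i, Measurable (X i))
    (hindep : iIndepFun X P)
    (hdist : ∀ i, Measure.map (X i) P = gaussianReal 0 1)
    (Θ : Ω → Fin n → ℝ) (hΘmeas : Measurable Θ)
    (hΘX : IndepFun Θ (fun ω i => X i ω) P)
    (hcond : P {ω | |(∑ i, Θ ω i) / n| ≤ τ} ≠ 0)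
    (lam : ℝ)
    (hlam : 2 - Phi (lam - τ * Real.sqrt n) - Phi (lam + τ * Real.sqrt n) = γ) :
    P ({ω | Real.sqrt n * lam < |∑ i, (Θ ω i + X i ω)|} ∩
        {ω | |(∑ i, Θ ω i) / n| ≤ τ}) / P {ω | |(∑ i, Θ ω i) / n| ≤ τ} ≤
      ENNReal.ofReal γ :=
  stmt14_general P γ τ hγ n hn X hmeas hindep hdist Θ hΘmeas hΘX lam hlam
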